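/- arXiv:1906.06304 — 8 statements merged into one kernel-verified Lean document; each statement's English description precedes it below -/
import Mathlib

section
/- Let n ≥ 5, S = {(1 i) : 2 ≤ i ≤ n} ⊆ Sym_n, and let φ be the map on Sym_n defined by φ(x) = (2 4)·x·(2 3)(4 5). Then φ is an automorphism of order 2 of the left Star graph Cay_L(Sym_n, S) that interchanges only non-adjacent vertices (i.e., x and φ(x) are never adjacent, and φ(x) ≠ x for all x). -/
/-!
Write `φ x = a * x * b` with `a = (2 4)` and `b = (2 3)(4 5)`. Left translations are automorphisms of
any left Cayley graph, and right multiplication by `b` acts on `y⁻¹ * x` by conjugation, which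
permutes the star transpositions `(1 i)` because `b` fixes `1`. Both `a` and `b` are involutions, so
`φ` is one; and `sign (φ x) = -sign x`, so `φ` has no fixed points. Finally
`(φ x)⁻¹ * x = b * (x⁻¹ a x)` is `b` times a transposition; were it a star transposition `(1 i)`,
then `b = (1 i) τ` would fix `1`, forcing `τ = (1 i)` and `b = 1`.
-/

open Equiv Equiv.Perm

theorem adj_mul_mul_iff {G : Type*} [Group G] {S : Set G} {Γ : SimpleGraph G}
    (hΓ : ∀ x y, Γ.Adj x y ↔ y⁻¹ * x ∈ S) (a : G) {b : G}
    (hb : ∀ s, b⁻¹ * s * b ∈ S ↔ s ∈ S) (x y : G) :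
    Γ.Adj (a * x * b) (a * y * b) ↔ Γ.Adj x y := by
  have hconj : (a * y * b)⁻¹ * (a * x * b) = b⁻¹ * (y⁻¹ * x) * b := by group
  rw [hΓ, hΓ, hconj, hb]

theorem involutive_mul_mul {G : Type*} [Group G] {a b : G} (ha : a * a = 1) (hb : b * b = 1) :
    Function.Involutive (fun x => a * x * b) := fun x =>
  calc a * (a * x * b) * b = a * a * x * (b * b) := by group
    _ = x := by rw [ha, hb, one_mul, mul_one]

theorem mul_mul_ne_self_of_sign_mul_eq_neg_one {α : Type*} [DecidableEq α] [Fintype α]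
    {a b : Perm α} (h : sign a * sign b = -1) (x : Perm α) : a * x * b ≠ x := fun hx => by
  have hsign : sign a * sign b * sign x = sign x := by
    rw [mul_right_comm, ← map_mul, ← map_mul, hx]
  rw [h, neg_one_mul] at hsign
  exact neg_units_ne_self _ hsign

section StarTranspositions

variable {α : Type*} [DecidableEq α]

def starTranspositions (z : α) : Set (Perm α) :=
  {σ | ∃ i, i ≠ z ∧ σ = swap z i}

theorem mul_mul_inv_mem_starTranspositions {z : α} {g σ : Perm α} (hg : g z = z)
    (hσ : σ ∈ starTranspositions z) : g * σ * g⁻¹ ∈ starTranspositions z := by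
  obtain ⟨i, hi, rfl⟩ := hσ
  refine ⟨g i, fun h => hi (g.injective (h.trans hg.symm)), ?_⟩
  rw [← swap_apply_apply, hg]

theorem inv_mul_mul_mem_starTranspositions_iff {z : α} {g : Perm α} (hg : g z = z)
    (σ : Perm α) : g⁻¹ * σ * g ∈ starTranspositions z ↔ σ ∈ starTranspositions z := by
  refine ⟨fun h => ?_, fun h => ?_⟩
  · simpa [mul_assoc] using mul_mul_inv_mem_starTranspositions hg h
  · simpa using mul_mul_inv_mem_starTranspositions (inv_eq_iff_eq.2 hg.symm) h

theorem mul_swap_notMem_starTranspositions {z : α} {g : Perm α} (hg : g z = z) (hg1 : g ≠ 1)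
    (u v : α) : g * swap u v ∉ starTranspositions z := by
  rintro ⟨i, hiz, hgi⟩
  have hg_eq : g = swap z i * swap u v := by
    rw [← hgi, mul_assoc, swap_mul_self, mul_one]
  have huv_z : swap u v z = i := by
    rwa [hg_eq, Perm.mul_apply, swap_apply_eq_iff, swap_apply_left] at hg
  -- a transposition sending `z` to `i ≠ z` is `(z i)`
  have huv : swap u v = swap z i := by
    obtain ⟨-, rfl | rfl⟩ := swap_apply_ne_self_iff.1 (huv_z.trans_ne hiz)
    · rw [swap_apply_left] at huv_z
      rw [huv_z]
    · rw [swap_apply_right] at huv_z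
      rw [huv_z, swap_comm]
  exact hg1 (by rw [hg_eq, huv, swap_mul_self])

theorem not_adj_swap_mul_mul_self {z : α} {Γ : SimpleGraph (Perm α)}
    (hΓ : ∀ x y, Γ.Adj x y ↔ y⁻¹ * x ∈ starTranspositions z) (p q : α) {b : Perm α}
    (hb : b z = z) (hb1 : b ≠ 1) (x : Perm α) : ¬ Γ.Adj x (swap p q * x * b) := by
  have hconj : (swap p q * x * b)⁻¹ * x = b⁻¹ * swap (x⁻¹ p) (x⁻¹ q) := by
    rw [swap_apply_apply, inv_inv, mul_inv_rev, mul_inv_rev, swap_inv]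
    group
  rw [hΓ, hconj]
  exact mul_swap_notMem_starTranspositions (inv_eq_iff_eq.2 hb.symm) (inv_ne_one.2 hb1) _ _

end StarTranspositions

-- `Fin n` is 0-based: the points `1, …, 5` of the paper are `0, …, 4`.
/-- For `n ≥ 5`, with `Sym_n = Equiv.Perm (Fin n)` (0-based: `0,1,2,3,4`
play the roles of `1,2,3,4,5`) and `S = {swap 0 i : i ≠ 0}`, the map
`φ(x) = (2 4) * x * (2 3)(4 5)` (0-based: `swap 1 3 * x * swap 1 2 * swap 3 4`)
is an order-2 automorphism of the left Star graph `Cay_L(Sym_n, S)` that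
interchanges only non-adjacent vertices. -/
theorem star_graph_dual_seidel_involution
    (n : ℕ) (hn : 5 ≤ n)
    (S : Set (Equiv.Perm (Fin n)))
    (hS : S = {σ | ∃ i : Fin n, i ≠ ⟨0, by omega⟩ ∧ σ = Equiv.swap ⟨0, by omega⟩ i})
    (Γ : SimpleGraph (Equiv.Perm (Fin n)))
    (hΓ : ∀ x y : Equiv.Perm (Fin n), Γ.Adj x y ↔ y⁻¹ * x ∈ S)
    (φ : Equiv.Perm (Fin n) → Equiv.Perm (Fin n))
    (hφ : ∀ x, φ x = Equiv.swap (⟨1, by omega⟩ : Fin n) ⟨3, by omega⟩ * x *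
      (Equiv.swap (⟨1, by omega⟩ : Fin n) ⟨2, by omega⟩ *
        Equiv.swap (⟨3, by omega⟩ : Fin n) ⟨4, by omega⟩)) :
    (∀ x y, Γ.Adj (φ x) (φ y) ↔ Γ.Adj x y) ∧
    (∀ x, φ (φ x) = x) ∧
    (∀ x, φ x ≠ x) ∧
    (∀ x, ¬ Γ.Adj x (φ x)) := by
  subst hS
  set b := swap (⟨1, by omega⟩ : Fin n) ⟨2, by omega⟩ * swap ⟨3, by omega⟩ ⟨4, by omega⟩
  have hb0 : b ⟨0, by omega⟩ = ⟨0, by omega⟩ := by simp [b, swap_apply_def]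
  have hb1 : b ≠ 1 := fun h => by
    have h1 := DFunLike.congr_fun h (⟨1, by omega⟩ : Fin n)
    simp [b, swap_apply_def] at h1
  have hbb : b * b = 1 := by
    have hcomm : Commute (swap (⟨3, by omega⟩ : Fin n) ⟨4, by omega⟩)
        (swap ⟨1, by omega⟩ ⟨2, by omega⟩) :=
      (disjoint_swap_swap (by simp)).commute
    rw [hcomm.mul_mul_mul_comm, swap_mul_self, swap_mul_self, one_mul]
  have hsign : sign (swap (⟨1, by omega⟩ : Fin n) ⟨3, by omega⟩) * sign b = -1 := by
    simp [b]
  have hφ_eq : φ = fun x => swap ⟨1, by omega⟩ ⟨3, by omega⟩ * x * b := funext hφ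
  subst hφ_eq
  exact ⟨adj_mul_mul_iff hΓ _ (inv_mul_mul_mem_starTranspositions_iff hb0),
    involutive_mul_mul (swap_mul_self _ _) hbb,
    mul_mul_ne_self_of_sign_mul_eq_neg_one hsign,
    not_adj_swap_mul_mul_self hΓ _ _ hb0 hb1⟩
end

section
/- Let π_ℓ, π_r ∈ Sym_n be involutions of different parity with π_r S π_r⁻¹ = S, where S = {(1 i) : 2 ≤ i ≤ n}, and suppose π_ℓ is not conjugate to any element of π_r S. Then the map φ(x) = π_ℓ x π_r is an order-2 automorphism of Cay_L(Sym_n, S) such that x and φ(x) are non-adjacent for all x. -/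
/-!
Since `(πl y πr)⁻¹ (πl x πr) = πr⁻¹ (y⁻¹ x) πr`, the map `φ` turns adjacency into conjugation
by `πr`, which preserves `S`. Similarly `πr · (φ x)⁻¹ x = x⁻¹ πl x`, so an edge between `x` and
`φ x` would make `πl` conjugate to an element of `πr S`. Finally `φ 1 = 1` would force
`πl πr = 1`, impossible for permutations of different sign.
-/

section TwoSidedTranslation

variable {G : Type*} [Group G] {S : Set G}

theorem conj_mem_iff_of_image_conj_eq {b : G} (hS : (fun s => b * s * b⁻¹) '' S = S) (t : G) :
    b⁻¹ * t * b ∈ S ↔ t ∈ S := by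
  conv_rhs => rw [← hS]
  constructor
  · exact fun ht => ⟨_, ht, by group⟩
  · rintro ⟨s, hs, rfl⟩
    rwa [show b⁻¹ * (b * s * b⁻¹) * b = s by group]

theorem inv_mul_mem_iff_of_image_conj_eq {b : G} (hS : (fun s => b * s * b⁻¹) '' S = S)
    (a x y : G) : (a * y * b)⁻¹ * (a * x * b) ∈ S ↔ y⁻¹ * x ∈ S := by
  rw [show (a * y * b)⁻¹ * (a * x * b) = b⁻¹ * (y⁻¹ * x) * b by group]
  exact conj_mem_iff_of_image_conj_eq hS _

theorem involutive_mul_mul_of_inv_eq_self {a b : G} (ha : a⁻¹ = a) (hb : b⁻¹ = b) :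
    Function.Involutive fun x => a * x * b := fun x =>
  calc a * (a * x * b) * b = a⁻¹ * (a * x * b) * b⁻¹ := by rw [ha, hb]
    _ = x := by group

theorem inv_mul_mul_mul_notMem_of_conj_ne {a b : G} (ha : a⁻¹ = a)
    (hS : ∀ g, ∀ s ∈ S, g⁻¹ * a * g ≠ b * s) (x : G) : (a * x * b)⁻¹ * x ∉ S := fun hx =>
  hS x _ hx <| by
    rw [show b * ((a * x * b)⁻¹ * x) = x⁻¹ * a⁻¹ * x by group, ha]

end TwoSidedTranslation

theorem Equiv.Perm.mul_ne_one_of_sign_ne {α : Type*} [DecidableEq α] [Fintype α]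
    {σ τ : Equiv.Perm α} (h : Equiv.Perm.sign σ ≠ Equiv.Perm.sign τ) : σ * τ ≠ 1 := by
  intro hστ
  apply h
  have hsign : Equiv.Perm.sign σ * Equiv.Perm.sign τ = 1 := by rw [← map_mul, hστ, map_one]
  rw [eq_inv_of_mul_eq_one_left hsign, Int.units_inv_eq_self]

/-- Let `π_ℓ, π_r ∈ Sym_n` be involutions of different parity with
`π_r S π_r⁻¹ = S`, where `S = {swap 0 i : i ≠ 0}` (0-based), and suppose `π_ℓ`
is not conjugate to any element of `π_r S`. Then `φ(x) = π_ℓ * x * π_r` is an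
order-2 automorphism of `Cay_L(Sym_n, S)` such that `x` and `φ x` are
non-adjacent for all `x`. -/
theorem star_graph_involution_of_good_pair
    (n : ℕ)
    (S : Set (Equiv.Perm (Fin n)))
    (Γ : SimpleGraph (Equiv.Perm (Fin n)))
    (hΓ : ∀ x y : Equiv.Perm (Fin n), Γ.Adj x y ↔ y⁻¹ * x ∈ S)
    (πl πr : Equiv.Perm (Fin n))
    (hl2 : orderOf πl = 2) (hr2 : orderOf πr = 2)
    (hparity : Equiv.Perm.sign πl ≠ Equiv.Perm.sign πr)
    (hconjS : (fun s => πr * s * πr⁻¹) '' S = S)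
    (hnotconj : ∀ g : Equiv.Perm (Fin n), ∀ s ∈ S, g⁻¹ * πl * g ≠ πr * s)
    (φ : Equiv.Perm (Fin n) → Equiv.Perm (Fin n))
    (hφ : ∀ x, φ x = πl * x * πr) :
    (∀ x y, Γ.Adj (φ x) (φ y) ↔ Γ.Adj x y) ∧
    (∀ x, φ (φ x) = x) ∧
    (∃ x, φ x ≠ x) ∧
    (∀ x, ¬ Γ.Adj x (φ x)) := by
  have hl := inv_eq_self_of_orderOf_eq_two hl2
  have hr := inv_eq_self_of_orderOf_eq_two hr2
  refine ⟨fun x y => ?_, fun x => ?_, ⟨1, ?_⟩, fun x => ?_⟩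
  · rw [hΓ, hΓ, hφ, hφ]
    exact inv_mul_mem_iff_of_image_conj_eq hconjS πl x y
  · rw [hφ, hφ]
    exact involutive_mul_mul_of_inv_eq_self hl hr x
  · rw [hφ, mul_one]
    exact Equiv.Perm.mul_ne_one_of_sign_ne hparity
  · rw [hΓ, hφ]
    exact inv_mul_mul_mul_notMem_of_conj_ne hl hnotconj x
end

section
/- Let Γ be a simple graph with adjacency matrix A, and let φ be an automorphism of Γ of order 2 that interchanges only non-adjacent vertices, with permutation matrix P. Then PA is a symmetric (0,1)-matrix with zero diagonal, i.e., PA is the adjacency matrix of a simple graph. -/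
/-!
Since `P` is the permutation matrix of `φ`, `(P * A) v w = A (φ v) w`, so `P * A` is the adjacency
matrix of the relation `v ~ w :↔ φ v ~ w`. This relation is symmetric because `φ` is an involutive
automorphism (`φ v ~ w ↔ v ~ φ w`), and irreflexive because `φ` swaps only non-adjacent vertices.
-/

theorem PEquiv.toMatrix_toPEquiv_symm {m n α : Type*} [DecidableEq m] [DecidableEq n]
    [Zero α] [One α] (σ : n ≃ m) :
    σ.symm.toPEquiv.toMatrix = (Matrix.of fun i j => if i = σ j then 1 else 0 : Matrix m n α) := by
  ext i j
  simp [Equiv.eq_symm_apply, eq_comm]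

namespace SimpleGraph

variable {V : Type*} {G : SimpleGraph V}

theorem Iso.adj_apply_comm_of_involutive (φ : G ≃g G) (hφ : Function.Involutive φ) (v w : V) :
    G.Adj (φ v) w ↔ G.Adj (φ w) v := by
  rw [← φ.map_adj_iff, hφ v, adj_comm]

theorem Iso.symm_eq_of_involutive (φ : G ≃g G) (hφ : Function.Involutive φ) : ⇑φ.symm = φ :=
  funext fun v => φ.symm_apply_eq.2 (hφ v).symm

/-- The dual Seidel switching of `G` with respect to `φ`: its adjacency matrix is `P * A`. -/
def dualSwitch (φ : G ≃g G) (hφ : Function.Involutive φ) (hφG : ∀ v, ¬G.Adj v (φ v)) :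
    SimpleGraph V where
  Adj v w := G.Adj (φ v) w
  symm := ⟨fun v w => (φ.adj_apply_comm_of_involutive hφ v w).1⟩
  loopless := ⟨fun v h => hφG v h.symm⟩

variable (φ : G ≃g G) (hφ : Function.Involutive φ) (hφG : ∀ v, ¬G.Adj v (φ v))

instance [DecidableRel G.Adj] : DecidableRel (G.dualSwitch φ hφ hφG).Adj :=
  fun v w => inferInstanceAs (Decidable (G.Adj (φ v) w))

theorem adjMatrix_dualSwitch (α : Type*) [Zero α] [One α] [DecidableRel G.Adj] :
    (G.dualSwitch φ hφ hφG).adjMatrix α = (G.adjMatrix α).submatrix φ id :=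
  rfl

end SimpleGraph

/-- If `φ` is an order-2 automorphism of a simple graph `Γ`
interchanging only non-adjacent vertices, `A` the adjacency matrix and `P` the
permutation matrix of `φ`, then `P * A` is a symmetric (0,1)-matrix with zero
diagonal, i.e. the adjacency matrix of a simple graph. -/
theorem dual_seidel_switching_gives_adjacency_matrix
    {V : Type*} [Fintype V] [DecidableEq V]
    (Γ : SimpleGraph V) [DecidableRel Γ.Adj]
    (φ : Γ ≃g Γ) (hinv : ∀ v, φ (φ v) = v)
    (hnonadj : ∀ v, φ v ≠ v → ¬ Γ.Adj v (φ v))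
    (A P : Matrix V V ℝ)
    (hA : A = Γ.adjMatrix ℝ)
    (hP : P = Matrix.of fun i j => if i = φ j then 1 else 0) :
    Matrix.transpose (P * A) = P * A ∧
    (∀ i j, (P * A) i j = 0 ∨ (P * A) i j = 1) ∧
    (∀ i, (P * A) i i = 0) := by
  have hφ : Function.Involutive φ := hinv
  have hφΓ : ∀ v, ¬Γ.Adj v (φ v) := fun v hv =>
    hnonadj v (fun hfix => Γ.irrefl (hfix ▸ hv)) hv
  have hP' : P = φ.toEquiv.symm.toPEquiv.toMatrix :=
    hP.trans (PEquiv.toMatrix_toPEquiv_symm _).symm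
  have hPA : P * A = (Γ.dualSwitch φ hφ hφΓ).adjMatrix ℝ := by
    rw [hP', hA, PEquiv.toMatrix_toPEquiv_mul, SimpleGraph.adjMatrix_dualSwitch]
    exact congrArg (fun f => (Γ.adjMatrix ℝ).submatrix f id) (φ.symm_eq_of_involutive hφ)
  have hadj := (Γ.dualSwitch φ hφ hφΓ).isAdjMatrix_adjMatrix ℝ
  rw [hPA]
  exact ⟨hadj.symm.eq, hadj.zero_or_one, hadj.apply_diag⟩
end

section
/- Let Γ be a simple graph with adjacency matrix A and let P be the permutation matrix of an order-2 automorphism of Γ that interchanges only non-adjacent vertices. Then (PA)² = A². In particular, if all eigenvalues of A are integers, then all eigenvalues of PA are integers. -/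
/-!
Since `φ` is an involutive automorphism, `P² = 1` and `PAP = A`, so `(PA)² = (PAP)A = A²`.
If `μ` is an eigenvalue of `PA`, then `μ²` is an eigenvalue of `A²`; as
`A² - μ² = (A - μ)(A + μ)` with commuting factors, one of them is singular, so `μ` or `-μ` is
an eigenvalue of `A`.
-/

open Matrix

theorem spectrum.mem_or_neg_mem_of_sq_mem {R A : Type*} [CommRing R] [Ring A] [Algebra R A]
    {a : A} {r : R} (h : r ^ 2 ∈ spectrum R (a ^ 2)) :
    r ∈ spectrum R a ∨ -r ∈ spectrum R a := by
  simp only [spectrum.mem_iff] at h ⊢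
  by_contra! ⟨hpos, hneg⟩
  have hfactor : algebraMap R A (r ^ 2) - a ^ 2 =
      -((algebraMap R A r - a) * (algebraMap R A (-r) - a)) := by
    have hcomm := Algebra.commutes r a
    rw [map_pow, map_neg]
    simp only [mul_sub, sub_mul, mul_neg, hcomm, sq]
    abel
  exact h (hfactor ▸ (hpos.mul hneg).neg)

theorem spectrum.mem_or_neg_mem_of_sq_eq {𝕜 A : Type*} [Field 𝕜] [Ring A] [Algebra 𝕜 A]
    {a b : A} (hab : a ^ 2 = b ^ 2) {μ : 𝕜} (hμ : μ ∈ spectrum 𝕜 a) :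
    μ ∈ spectrum 𝕜 b ∨ -μ ∈ spectrum 𝕜 b :=
  spectrum.mem_or_neg_mem_of_sq_mem (hab ▸ spectrum.pow_mem_pow a 2 hμ)

theorem Equiv.Perm.permMatrix_mul_sq_of_involutive {n R : Type*} [Fintype n] [DecidableEq n]
    [Semiring R] {σ : Equiv.Perm n} (hσ : Function.Involutive σ) {M : Matrix n n R}
    (hM : M.submatrix σ σ = M) : (σ.permMatrix R * M) ^ 2 = M ^ 2 := by
  have hconj : σ.permMatrix R * M * σ.permMatrix R = M := by
    rw [Equiv.Perm.permMatrix, PEquiv.toMatrix_toPEquiv_mul, PEquiv.mul_toMatrix_toPEquiv,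
      submatrix_submatrix, Function.comp_id, Function.id_comp,
      Function.Involutive.symm_eq_self_of_involutive σ hσ, hM]
  rw [sq, sq, ← mul_assoc, hconj]

theorem dual_seidel_switching_square_and_integrality_general
    {V : Type*} [Fintype V] [DecidableEq V]
    (Γ : SimpleGraph V) [DecidableRel Γ.Adj]
    (φ : Γ ≃g Γ) (hinv : ∀ v, φ (φ v) = v)
    (A P : Matrix V V ℝ)
    (hA : A = Γ.adjMatrix ℝ)
    (hP : P = Matrix.of fun i j => if i = φ j then 1 else 0) :
    (P * A) * (P * A) = A * A ∧
    ((∀ μ ∈ spectrum ℝ A, ∃ k : ℤ, μ = (k : ℝ)) →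
      ∀ μ ∈ spectrum ℝ (P * A), ∃ k : ℤ, μ = (k : ℝ)) := by
  have hinvol : Function.Involutive (φ.toEquiv : Equiv.Perm V) := hinv
  have hP_perm : P = Equiv.Perm.permMatrix ℝ (φ.toEquiv : Equiv.Perm V) := by
    ext i j
    simp [hP, Equiv.Perm.permMatrix, Function.Involutive.eq_iff (f := φ) hinv]
  have hA_inv : A.submatrix φ φ = A := hA ▸ φ.toEmbedding.submatrix_adjMatrix ℝ
  have hsq : (P * A) ^ 2 = A ^ 2 :=
    hP_perm ▸ Equiv.Perm.permMatrix_mul_sq_of_involutive hinvol hA_inv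
  refine ⟨by simpa only [sq] using hsq, fun hint μ hμ => ?_⟩
  rcases spectrum.mem_or_neg_mem_of_sq_eq hsq hμ with hpos | hneg
  · exact hint μ hpos
  · obtain ⟨k, hk⟩ := hint (-μ) hneg
    exact ⟨-k, by push_cast; linarith⟩

/-- With `A` the adjacency matrix of `Γ` and `P` the permutation
matrix of an order-2 automorphism interchanging only non-adjacent vertices,
`(PA)² = A²`; in particular if all eigenvalues of `A` are integers then so are
all eigenvalues of `PA`. -/
theorem dual_seidel_switching_square_and_integrality
    {V : Type*} [Fintype V] [DecidableEq V]
    (Γ : SimpleGraph V) [DecidableRel Γ.Adj]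
    (φ : Γ ≃g Γ) (hinv : ∀ v, φ (φ v) = v)
    (hnonadj : ∀ v, φ v ≠ v → ¬ Γ.Adj v (φ v))
    (A P : Matrix V V ℝ)
    (hA : A = Γ.adjMatrix ℝ)
    (hP : P = Matrix.of fun i j => if i = φ j then 1 else 0) :
    (P * A) * (P * A) = A * A ∧
    ((∀ μ ∈ spectrum ℝ A, ∃ k : ℤ, μ = (k : ℝ)) →
      ∀ μ ∈ spectrum ℝ (P * A), ∃ k : ℤ, μ = (k : ℝ)) :=
  dual_seidel_switching_square_and_integrality_general Γ φ hinv A P hA hP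
end

section
/- Let m ≥ 2 and 1 ≤ t ≤ m−1. The permutation τ_t = (1 2)(3 4)···(2t−1 2t) of the (2m+1)-set X induces an involution of the Odd graph O_{m+1} (vertices are m-subsets of X, adjacency is disjointness) such that for every m-subset Y, the sets Y and τ_t(Y) are not disjoint (i.e., the induced automorphism interchanges only non-adjacent vertices). -/
/-!
Outside `{0, …, 2t-1}` the permutation `τ` fixes every point, and inside it pairs `2k ↔ 2k+1`.
An `m`-set `Y` with `t < m` therefore either contains a fixed point of `τ`, or lies in the `t`
pairs and so, by pigeonhole, contains both points of one pair; in either case `Y` meets `τ(Y)`.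
-/

open Finset

def IsPairSwap {n : ℕ} (t : ℕ) (τ : Fin n → Fin n) : Prop :=
  ∀ x : Fin n, (τ x).val = if x.val < 2 * t then 2 * (x.val / 2) + (1 - x.val % 2) else x.val

namespace IsPairSwap

variable {n t : ℕ} {τ : Fin n → Fin n}

theorem involutive (hτ : IsPairSwap t τ) : Function.Involutive τ := by
  intro x
  apply Fin.ext
  rw [hτ (τ x), hτ x]
  split_ifs <;> omega

theorem apply_eq_self (hτ : IsPairSwap t τ) {x : Fin n} (hx : 2 * t ≤ x.val) : τ x = x :=
  Fin.ext (by rw [hτ x, if_neg (by omega)])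

theorem apply_eq_of_div_two_eq (hτ : IsPairSwap t τ) {x y : Fin n} (hx : x.val < 2 * t) (hxy : x ≠ y)
    (h : x.val / 2 = y.val / 2) : τ x = y := by
  have hxy' : x.val ≠ y.val := Fin.val_ne_of_ne hxy
  apply Fin.ext
  rw [hτ x, if_pos hx]
  omega

theorem not_disjoint_image (hτ : IsPairSwap t τ) {Y : Finset (Fin n)} (hY : t < #Y) : ¬Disjoint Y (Y.image τ) := by
  rw [not_disjoint_iff]
  by_cases hfix : ∃ x ∈ Y, 2 * t ≤ x.val
  · obtain ⟨x, hx, hle⟩ := hfix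
    exact ⟨x, hx, mem_image.2 ⟨x, hx, hτ.apply_eq_self hle⟩⟩
  · push Not at hfix
    have hmaps : Set.MapsTo (fun a : Fin n => a.val / 2) Y (range t) := fun a ha =>
      mem_range.2 (Nat.div_lt_of_lt_mul (by linarith [hfix a ha]))
    obtain ⟨x, hx, y, hy, hxy, hpair⟩ :=
      exists_ne_map_eq_of_card_lt_of_maps_to (by rwa [card_range]) hmaps
    exact ⟨y, hy, mem_image.2 ⟨x, hx, hτ.apply_eq_of_div_two_eq (hfix x hx) hxy hpair⟩⟩

end IsPairSwap

theorem odd_graph_tau_t_interchanges_only_nonadjacent_general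
    (m t : ℕ) (hm : 2 ≤ m) (ht2 : t ≤ m - 1)
    (τ : Equiv.Perm (Fin (2 * m + 1)))
    (hτ : ∀ x : Fin (2 * m + 1),
      (τ x).val = if x.val < 2 * t then 2 * (x.val / 2) + (1 - x.val % 2) else x.val) :
    τ * τ = 1 ∧
    ∀ Y : Finset (Fin (2 * m + 1)), Y.card = m →
      ((Y.image τ).card = m ∧ (Y.image τ).image τ = Y ∧ ¬ Disjoint Y (Y.image τ)) := by
  have hinv := IsPairSwap.involutive hτ
  refine ⟨Equiv.ext hinv, fun Y hY => ⟨?_, ?_, ?_⟩⟩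
  · rw [card_image_of_injective Y τ.injective, hY]
  · rw [image_image, hinv.comp_self, image_id]
  · exact IsPairSwap.not_disjoint_image hτ (by omega)

/-- Let `m ≥ 2`, `1 ≤ t ≤ m-1`, and let `τ = (0 1)(2 3)⋯(2t-2 2t-1)`
(0-based version of `(1 2)⋯(2t-1 2t)`) be the permutation of `Fin (2m+1)`
swapping `2k ↔ 2k+1` for `k < t`. Then `τ` is an involution and, acting
elementwise on the `m`-subsets (the vertices of the Odd graph `O_{m+1}`, where
adjacency is disjointness), it interchanges only non-adjacent vertices: for
every `m`-subset `Y`, the sets `Y` and `τ(Y)` are not disjoint. -/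
theorem odd_graph_tau_t_interchanges_only_nonadjacent
    (m t : ℕ) (hm : 2 ≤ m) (ht1 : 1 ≤ t) (ht2 : t ≤ m - 1)
    (τ : Equiv.Perm (Fin (2 * m + 1)))
    (hτ : ∀ x : Fin (2 * m + 1),
      (τ x).val = if x.val < 2 * t then 2 * (x.val / 2) + (1 - x.val % 2) else x.val) :
    τ * τ = 1 ∧
    ∀ Y : Finset (Fin (2 * m + 1)), Y.card = m →
      ((Y.image τ).card = m ∧ (Y.image τ).image τ = Y ∧ ¬ Disjoint Y (Y.image τ)) :=
  odd_graph_tau_t_interchanges_only_nonadjacent_general m t hm ht2 τ hτ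
end

section
/- Let m ≥ 2 and fix distinct i, j ∈ {1,...,2m+1}. The partition of the vertex set of the Odd graph O_{m+1} into V_{i,j} (m-subsets containing both i and j), V_{i,j̄} (containing i, not j), V_{ī,j} (containing j, not i), and V_{ī,j̄} (containing neither) is equitable: every vertex in V_{i,j} has exactly m+1 neighbors in V_{ī,j̄} and no neighbors elsewhere; every vertex in V_{i,j̄} has exactly m neighbors in V_{ī,j} and 1 neighbor in V_{ī,j̄}; every vertex in V_{ī,j} has exactly m neighbors in V_{i,j̄} and 1 neighbor in V_{ī,j̄}; every vertex in V_{ī,j̄} has exactly m−1 neighbors in V_{i,j}, 1 in V_{i,j̄}, and 1 in V_{ī,j}. -/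
/-!
A neighbour of an `m`-set `Y` in a `(2m+1)`-set is an `m`-subset of the `(m+1)`-set `Yᶜ`, i.e.
`Yᶜ.erase x` for a unique `x ∈ Yᶜ`. So the neighbours of `Y` are indexed by `Yᶜ`, and the class
of `Yᶜ.erase x` is read off from whether `i, j ∈ Yᶜ` and whether `x ∈ {i, j}`.
-/

open Finset

section
variable {α : Type*} [Fintype α] [DecidableEq α] {m : ℕ} {Y : Finset α}

theorem card_eq_and_disjoint_iff_exists_erase_compl (hY : #Yᶜ = m + 1) {Z : Finset α} :
    #Z = m ∧ Disjoint Y Z ↔ ∃ x ∈ Yᶜ, Yᶜ.erase x = Z := by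
  rw [and_comm, ← subset_compl_iff_disjoint_left, ← Nat.add_right_cancel_iff (n := 1), ← hY,
    ← exists_eq_insert_iff]
  constructor
  · rintro ⟨x, hxZ, hx⟩
    exact ⟨x, hx ▸ mem_insert_self x Z, hx ▸ erase_insert hxZ⟩
  · rintro ⟨x, hx, rfl⟩
    exact ⟨x, notMem_erase x Yᶜ, insert_erase hx⟩

theorem natCard_disjoint_eq_card_filter_compl_erase (hY : #Yᶜ = m + 1)
    (Q : Finset α → Prop) [DecidablePred Q] :
    Nat.card {Z : Finset α // #Z = m ∧ Disjoint Y Z ∧ Q Z} = #{x ∈ Yᶜ | Q (Yᶜ.erase x)} := by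
  rw [Nat.card_eq_fintype_card, Fintype.card_subtype,
    ← card_image_of_injOn ((erase_injOn Yᶜ).mono (filter_subset _ _))]
  congr 1
  ext Z
  simp only [mem_filter, mem_univ, true_and, mem_image, ← and_assoc,
    card_eq_and_disjoint_iff_exists_erase_compl hY]
  grind

end

theorem odd_graph_partition_equitable_general
    (m : ℕ) (i j : Fin (2 * m + 1)) (hij : i ≠ j) :
    ∀ Y : Finset (Fin (2 * m + 1)), Y.card = m →
      ((i ∈ Y ∧ j ∈ Y) →
        (Nat.card {Z : Finset (Fin (2 * m + 1)) //
            Z.card = m ∧ Disjoint Y Z ∧ i ∉ Z ∧ j ∉ Z} = m + 1 ∧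
         Nat.card {Z : Finset (Fin (2 * m + 1)) //
            Z.card = m ∧ Disjoint Y Z ∧ i ∈ Z ∧ j ∈ Z} = 0 ∧
         Nat.card {Z : Finset (Fin (2 * m + 1)) //
            Z.card = m ∧ Disjoint Y Z ∧ i ∈ Z ∧ j ∉ Z} = 0 ∧
         Nat.card {Z : Finset (Fin (2 * m + 1)) //
            Z.card = m ∧ Disjoint Y Z ∧ i ∉ Z ∧ j ∈ Z} = 0)) ∧
      ((i ∈ Y ∧ j ∉ Y) →
        (Nat.card {Z : Finset (Fin (2 * m + 1)) //
            Z.card = m ∧ Disjoint Y Z ∧ i ∉ Z ∧ j ∈ Z} = m ∧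
         Nat.card {Z : Finset (Fin (2 * m + 1)) //
            Z.card = m ∧ Disjoint Y Z ∧ i ∉ Z ∧ j ∉ Z} = 1 ∧
         Nat.card {Z : Finset (Fin (2 * m + 1)) //
            Z.card = m ∧ Disjoint Y Z ∧ i ∈ Z ∧ j ∈ Z} = 0 ∧
         Nat.card {Z : Finset (Fin (2 * m + 1)) //
            Z.card = m ∧ Disjoint Y Z ∧ i ∈ Z ∧ j ∉ Z} = 0)) ∧
      ((i ∉ Y ∧ j ∈ Y) →
        (Nat.card {Z : Finset (Fin (2 * m + 1)) //
            Z.card = m ∧ Disjoint Y Z ∧ i ∈ Z ∧ j ∉ Z} = m ∧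
         Nat.card {Z : Finset (Fin (2 * m + 1)) //
            Z.card = m ∧ Disjoint Y Z ∧ i ∉ Z ∧ j ∉ Z} = 1 ∧
         Nat.card {Z : Finset (Fin (2 * m + 1)) //
            Z.card = m ∧ Disjoint Y Z ∧ i ∈ Z ∧ j ∈ Z} = 0 ∧
         Nat.card {Z : Finset (Fin (2 * m + 1)) //
            Z.card = m ∧ Disjoint Y Z ∧ i ∉ Z ∧ j ∈ Z} = 0)) ∧
      ((i ∉ Y ∧ j ∉ Y) →
        (Nat.card {Z : Finset (Fin (2 * m + 1)) //
            Z.card = m ∧ Disjoint Y Z ∧ i ∈ Z ∧ j ∈ Z} = m - 1 ∧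
         Nat.card {Z : Finset (Fin (2 * m + 1)) //
            Z.card = m ∧ Disjoint Y Z ∧ i ∈ Z ∧ j ∉ Z} = 1 ∧
         Nat.card {Z : Finset (Fin (2 * m + 1)) //
            Z.card = m ∧ Disjoint Y Z ∧ i ∉ Z ∧ j ∈ Z} = 1 ∧
         Nat.card {Z : Finset (Fin (2 * m + 1)) //
            Z.card = m ∧ Disjoint Y Z ∧ i ∉ Z ∧ j ∉ Z} = 0)) := by
  intro Y hY
  have hYc : #Yᶜ = m + 1 := by rw [card_compl, Fintype.card_fin, hY]; omega
  simp only [natCard_disjoint_eq_card_filter_compl_erase hYc, ← notMem_compl (s := Y), not_not]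
  -- keeps `simp` from turning the filters over `Yᶜ` into filters over `x ∉ Y`
  generalize Yᶜ = C at hYc
  refine ⟨?_, ?_, ?_, ?_⟩ <;> rintro ⟨hi, hj⟩
  · simp [hi, hj, hYc]
  · simp [hi, hj, hYc, filter_ne, filter_eq]
  · simp [hi, hj, hYc, filter_ne, filter_eq]
  · have hboth : {x ∈ C | i ∈ C.erase x ∧ j ∈ C.erase x} = C \ {i, j} := by grind
    have honly_i : {x ∈ C | i ∈ C.erase x ∧ j ∉ C.erase x} = {j} := by grind
    have honly_j : {x ∈ C | i ∉ C.erase x ∧ j ∈ C.erase x} = {i} := by grind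
    have hnone : {x ∈ C | i ∉ C.erase x ∧ j ∉ C.erase x} = ∅ := by grind
    rw [hboth, honly_i, honly_j, hnone, card_sdiff_of_subset (by grind), card_pair hij, hYc]
    simp

/-- The partition of the vertices of the Odd graph `O_{m+1}`
(`m`-subsets of `Fin (2m+1)`, adjacency = disjointness) according to containment
of two fixed distinct points `i, j` is equitable, with the quotient matrix given
in the paper: the number of neighbors of a vertex in each class depends only on
the class of the vertex. -/
theorem odd_graph_partition_equitable
    (m : ℕ) (hm : 2 ≤ m) (i j : Fin (2 * m + 1)) (hij : i ≠ j) :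
    ∀ Y : Finset (Fin (2 * m + 1)), Y.card = m →
      ((i ∈ Y ∧ j ∈ Y) →
        (Nat.card {Z : Finset (Fin (2 * m + 1)) //
            Z.card = m ∧ Disjoint Y Z ∧ i ∉ Z ∧ j ∉ Z} = m + 1 ∧
         Nat.card {Z : Finset (Fin (2 * m + 1)) //
            Z.card = m ∧ Disjoint Y Z ∧ i ∈ Z ∧ j ∈ Z} = 0 ∧
         Nat.card {Z : Finset (Fin (2 * m + 1)) //
            Z.card = m ∧ Disjoint Y Z ∧ i ∈ Z ∧ j ∉ Z} = 0 ∧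
         Nat.card {Z : Finset (Fin (2 * m + 1)) //
            Z.card = m ∧ Disjoint Y Z ∧ i ∉ Z ∧ j ∈ Z} = 0)) ∧
      ((i ∈ Y ∧ j ∉ Y) →
        (Nat.card {Z : Finset (Fin (2 * m + 1)) //
            Z.card = m ∧ Disjoint Y Z ∧ i ∉ Z ∧ j ∈ Z} = m ∧
         Nat.card {Z : Finset (Fin (2 * m + 1)) //
            Z.card = m ∧ Disjoint Y Z ∧ i ∉ Z ∧ j ∉ Z} = 1 ∧
         Nat.card {Z : Finset (Fin (2 * m + 1)) //
            Z.card = m ∧ Disjoint Y Z ∧ i ∈ Z ∧ j ∈ Z} = 0 ∧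
         Nat.card {Z : Finset (Fin (2 * m + 1)) //
            Z.card = m ∧ Disjoint Y Z ∧ i ∈ Z ∧ j ∉ Z} = 0)) ∧
      ((i ∉ Y ∧ j ∈ Y) →
        (Nat.card {Z : Finset (Fin (2 * m + 1)) //
            Z.card = m ∧ Disjoint Y Z ∧ i ∈ Z ∧ j ∉ Z} = m ∧
         Nat.card {Z : Finset (Fin (2 * m + 1)) //
            Z.card = m ∧ Disjoint Y Z ∧ i ∉ Z ∧ j ∉ Z} = 1 ∧
         Nat.card {Z : Finset (Fin (2 * m + 1)) //
            Z.card = m ∧ Disjoint Y Z ∧ i ∈ Z ∧ j ∈ Z} = 0 ∧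
         Nat.card {Z : Finset (Fin (2 * m + 1)) //
            Z.card = m ∧ Disjoint Y Z ∧ i ∉ Z ∧ j ∈ Z} = 0)) ∧
      ((i ∉ Y ∧ j ∉ Y) →
        (Nat.card {Z : Finset (Fin (2 * m + 1)) //
            Z.card = m ∧ Disjoint Y Z ∧ i ∈ Z ∧ j ∈ Z} = m - 1 ∧
         Nat.card {Z : Finset (Fin (2 * m + 1)) //
            Z.card = m ∧ Disjoint Y Z ∧ i ∈ Z ∧ j ∉ Z} = 1 ∧
         Nat.card {Z : Finset (Fin (2 * m + 1)) //
            Z.card = m ∧ Disjoint Y Z ∧ i ∉ Z ∧ j ∈ Z} = 1 ∧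
         Nat.card {Z : Finset (Fin (2 * m + 1)) //
            Z.card = m ∧ Disjoint Y Z ∧ i ∉ Z ∧ j ∉ Z} = 0)) :=
  odd_graph_partition_equitable_general m i j hij
end

section
/- Let m ≥ 2. For 1 ≤ i ≤ 2m, let f_i = f_{i,2m+1} be the function on m-subsets of {1,...,2m+1} with value 1 on sets containing i but not 2m+1, value −1 on sets containing 2m+1 but not i, and 0 otherwise, regarded as vectors in ℝ^{V}. Then ⟨f_i, f_i⟩ = 2·C(2m−1, m−1) for all i, and ⟨f_i, f_j⟩ = C(2m−1, m−1) for all i ≠ j; consequently the Gram matrix equals C(2m−1,m−1)·(J+I) and the vectors f_1, ..., f_{2m} are linearly independent. -/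
/-!
Writing `χ_a(Y) = [a ∈ Y]`, the function `f_i` is `χ_i - χ_z` with `z = 2m+1`, so every Gram
entry expands into four sums `χ_a ⬝ᵥ χ_b`, each counting the `m`-sets that contain `{a, b}`;
Pascal's rule collapses the result to `C(2m-1, m-1)·(J+I)`. A Gram matrix `c·(J+I)` with
`c ≠ 0` is nonsingular, which gives linear independence.
-/

open Finset

section MemIndicator

variable {α : Type*} [DecidableEq α]

def memIndicator (n : ℕ) (a : α) (Y : {Y : Finset α // #Y = n}) : ℝ :=
  if a ∈ Y.1 then 1 else 0

theorem memIndicator_sub_memIndicator_apply {n : ℕ} (a z : α) (Y : {Y : Finset α // #Y = n}) :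
    (memIndicator n a - memIndicator n z) Y =
      if a ∈ Y.1 ∧ z ∉ Y.1 then 1 else if z ∈ Y.1 ∧ a ∉ Y.1 then -1 else 0 := by
  by_cases ha : a ∈ Y.1 <;> by_cases hz : z ∈ Y.1 <;> simp [memIndicator, ha, hz]

variable [Fintype α]

theorem memIndicator_dotProduct {n : ℕ} (a b : α) (h : #{a, b} ≤ n) :
    memIndicator n a ⬝ᵥ memIndicator n b =
      ((Fintype.card α - #{a, b}).choose (n - #{a, b}) : ℝ) := by
  calc memIndicator n a ⬝ᵥ memIndicator n b
      = ∑ Y : {Y : Finset α // #Y = n}, if {a, b} ⊆ Y.1 then (1 : ℝ) else 0 := by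
        simp only [dotProduct, memIndicator, ite_zero_mul_ite_zero, mul_one, insert_subset_iff,
          singleton_subset_iff]
    _ = ∑ Y ∈ univ.powersetCard n, if {a, b} ⊆ Y then (1 : ℝ) else 0 :=
        (sum_subtype (univ.powersetCard n) (fun _ => mem_powersetCard_univ)
          (fun Y => if {a, b} ⊆ Y then (1 : ℝ) else 0)).symm
    _ = #((univ.powersetCard n).filter ({a, b} ⊆ ·)) := sum_boole _ _
    _ = _ := by rw [card_filter_powersetCard_subset _ _ _ (subset_univ _) h, card_univ]

theorem memIndicator_dotProduct_self {n : ℕ} (hn : 1 ≤ n) (a : α) :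
    memIndicator n a ⬝ᵥ memIndicator n a = ((Fintype.card α - 1).choose (n - 1) : ℝ) := by
  simpa using memIndicator_dotProduct (n := n) a a (by simpa using hn)

theorem memIndicator_dotProduct_of_ne {n : ℕ} (hn : 2 ≤ n) {a b : α} (hab : a ≠ b) :
    memIndicator n a ⬝ᵥ memIndicator n b = ((Fintype.card α - 2).choose (n - 2) : ℝ) := by
  simpa [card_pair hab] using memIndicator_dotProduct (n := n) a b (by rwa [card_pair hab])

theorem sub_memIndicator_dotProduct_self {n : ℕ} (hn : 2 ≤ n) {a z : α} (haz : a ≠ z) :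
    (memIndicator n a - memIndicator n z) ⬝ᵥ (memIndicator n a - memIndicator n z) =
      2 * ((Fintype.card α - 2).choose (n - 1) : ℝ) := by
  have hN : 2 ≤ Fintype.card α := by simpa [card_pair haz] using card_le_univ {a, z}
  simp only [sub_dotProduct, dotProduct_sub, memIndicator_dotProduct_self (by omega : 1 ≤ n),
    dotProduct_comm (memIndicator n z), memIndicator_dotProduct_of_ne hn haz]
  rw [Nat.choose_eq_choose_pred_add (by omega : 0 < Fintype.card α - 1) (by omega : 0 < n - 1)]
  simp only [Nat.sub_sub, Nat.cast_add]
  ring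

theorem sub_memIndicator_dotProduct_of_ne {n : ℕ} (hn : 2 ≤ n) {a b z : α} (haz : a ≠ z)
    (hbz : b ≠ z) (hab : a ≠ b) :
    (memIndicator n a - memIndicator n z) ⬝ᵥ (memIndicator n b - memIndicator n z) =
      ((Fintype.card α - 2).choose (n - 1) : ℝ) := by
  have hN : 2 ≤ Fintype.card α := by simpa [card_pair haz] using card_le_univ {a, z}
  simp only [sub_dotProduct, dotProduct_sub, memIndicator_dotProduct_self (by omega : 1 ≤ n),
    memIndicator_dotProduct_of_ne hn hab, memIndicator_dotProduct_of_ne hn haz,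
    memIndicator_dotProduct_of_ne hn hbz.symm]
  rw [Nat.choose_eq_choose_pred_add (by omega : 0 < Fintype.card α - 1) (by omega : 0 < n - 1)]
  simp only [Nat.sub_sub, Nat.cast_add]
  ring

end MemIndicator

theorem linearIndependent_of_dotProduct_eq {K ι κ : Type*} [Field K] [CharZero K] [Fintype ι]
    [Fintype κ] {v : ι → κ → K} {c : K} (hc : c ≠ 0) (hself : ∀ i, v i ⬝ᵥ v i = 2 * c)
    (hne : ∀ i j, i ≠ j → v i ⬝ᵥ v j = c) : LinearIndependent K v := by
  classical
  rw [Fintype.linearIndependent_iff]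
  intro g hg
  have hgram : ∀ i j, v i ⬝ᵥ v j = c + if i = j then c else 0 := by
    intro i j
    split_ifs with h
    · subst h; rw [hself]; ring
    · rw [hne i j h, add_zero]
  have hcoord : ∀ j, g j = -∑ i, g i := by
    intro j
    have h0 : (∑ i, g i • v i) ⬝ᵥ v j = 0 := by rw [hg, zero_dotProduct]
    simp only [sum_dotProduct, smul_dotProduct, hgram, smul_eq_mul, mul_add, mul_ite, mul_zero,
      sum_add_distrib, sum_ite_eq', mem_univ, if_true, ← sum_mul] at h0
    have hj : (∑ i, g i + g j) * c = 0 := by rw [add_mul]; exact h0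
    linear_combination (mul_eq_zero.mp hj).resolve_right hc
  have hsum : ∑ i, g i = 0 := by
    have h : ∑ i, g i = ∑ _i : ι, -∑ i, g i := sum_congr rfl fun j _ => hcoord j
    rw [sum_const, card_univ, nsmul_eq_mul] at h
    have h' : ((Fintype.card ι : K) + 1) * ∑ i, g i = 0 := by linear_combination h
    exact (mul_eq_zero.mp h').resolve_left (Nat.cast_add_one_ne_zero _)
  intro i
  rw [hcoord i, hsum, neg_zero]

/-- With `f_i = f_{i,2m+1}` (here 0-based: the last point of
`Fin (2m+1)` is `⟨2m,_⟩`) viewed as vectors indexed by the `m`-subsets, one has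
`⟨f_i, f_i⟩ = 2·C(2m-1, m-1)`, `⟨f_i, f_j⟩ = C(2m-1, m-1)` for `i ≠ j`
(so the Gram matrix is `C(2m-1,m-1)·(J+I)`), and `f_1, …, f_{2m}` are linearly
independent. -/
theorem odd_graph_eigenfunctions_gram_and_independent
    (m : ℕ) (hm : 2 ≤ m)
    (f : Fin (2 * m + 1) → {Y : Finset (Fin (2 * m + 1)) // Y.card = m} → ℝ)
    (hf : ∀ (i : Fin (2 * m + 1)) (Y : {Y : Finset (Fin (2 * m + 1)) // Y.card = m}),
      f i Y = if i ∈ Y.1 ∧ (⟨2 * m, by omega⟩ : Fin (2 * m + 1)) ∉ Y.1 then 1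
        else if (⟨2 * m, by omega⟩ : Fin (2 * m + 1)) ∈ Y.1 ∧ i ∉ Y.1 then -1
        else 0) :
    (∀ i : Fin (2 * m + 1), i ≠ ⟨2 * m, by omega⟩ →
      ∑ Y : {Y : Finset (Fin (2 * m + 1)) // Y.card = m}, f i Y * f i Y =
        2 * (Nat.choose (2 * m - 1) (m - 1) : ℝ)) ∧
    (∀ i j : Fin (2 * m + 1), i ≠ ⟨2 * m, by omega⟩ → j ≠ ⟨2 * m, by omega⟩ →
      i ≠ j →
      ∑ Y : {Y : Finset (Fin (2 * m + 1)) // Y.card = m}, f i Y * f j Y =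
        (Nat.choose (2 * m - 1) (m - 1) : ℝ)) ∧
    LinearIndependent ℝ
      (fun i : {i : Fin (2 * m + 1) // i ≠ ⟨2 * m, by omega⟩} => f i.1) := by
  set z : Fin (2 * m + 1) := ⟨2 * m, by omega⟩
  have hf' : ∀ i, f i = memIndicator m i - memIndicator m z := fun i =>
    funext fun Y => by rw [hf, memIndicator_sub_memIndicator_apply]
  have hcard : Fintype.card (Fin (2 * m + 1)) - 2 = 2 * m - 1 := by
    rw [Fintype.card_fin]; omega
  have hself : ∀ i, i ≠ z → f i ⬝ᵥ f i = 2 * ((2 * m - 1).choose (m - 1) : ℝ) := by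
    intro i hi
    rw [hf', sub_memIndicator_dotProduct_self hm hi, hcard]
  have hne : ∀ i j, i ≠ z → j ≠ z → i ≠ j → f i ⬝ᵥ f j = ((2 * m - 1).choose (m - 1) : ℝ) := by
    intro i j hi hj hij
    rw [hf', hf', sub_memIndicator_dotProduct_of_ne hm hi hj hij, hcard]
  refine ⟨hself, hne, linearIndependent_of_dotProduct_eq ?_ (fun i => hself i i.2)
    (fun i j hij => hne i j i.2 j.2 (Subtype.coe_ne_coe.mpr hij))⟩
  exact Nat.cast_ne_zero.mpr (Nat.choose_pos (by omega)).ne'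
end

section
/- Let n ≥ 3 and let Γ = Cay_L(Sym_n, S) be the left Star graph with S = {(1 i) : 2 ≤ i ≤ n}. Let H be the graph on the even permutations Alt_n where two vertices are adjacent iff they have a common neighbor in Γ. Then H is connected. -/
/-!
The transpositions `(0 i)` generate `Sym_n` and are odd, so every even permutation is a product
of an even number of them, i.e. of pairs `(0 i)(0 j)`. Right multiplication by such a pair is a
step in `H`: `x` and `x (0 i) (0 j)` have the common neighbour `x (0 i)` in the Cayley graph.
-/

open Pointwise

namespace Equiv.Perm

variable {α : Type*} [DecidableEq α] [Finite α]

theorem mclosure_swap_left_eq_top (a : α) :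
    Submonoid.closure {σ : Perm α | ∃ i, i ≠ a ∧ σ = swap a i} = ⊤ := by
  set T := Submonoid.closure {σ : Perm α | ∃ i, i ≠ a ∧ σ = swap a i}
  have swap_left_mem : ∀ i, i ≠ a → swap a i ∈ T :=
    fun i hi ↦ Submonoid.subset_closure ⟨i, hi, rfl⟩
  rw [eq_top_iff, ← mclosure_isSwap, Submonoid.closure_le]
  rintro _ ⟨i, j, hij, rfl⟩
  obtain rfl | hi := eq_or_ne i a
  · exact swap_left_mem j hij.symm
  obtain rfl | hj := eq_or_ne j a
  · exact swap_comm i j ▸ swap_left_mem i hij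
  rw [← swap_mul_swap_mul_swap hj hij.symm, swap_comm j a]
  exact mul_mem (mul_mem (swap_left_mem i hi) (swap_left_mem j hj)) (swap_left_mem i hi)

end Equiv.Perm

section ParityGenerators

variable {M : Type*} [Monoid M] {S : Set M} {χ : M →* ℤˣ}

theorem mem_mclosure_mul_self_of_map_eq_one (hgen : Submonoid.closure S = ⊤)
    (hχ : ∀ s ∈ S, χ s = -1) {g : M} (hg : χ g = 1) : g ∈ Submonoid.closure (S * S) := by
  suffices h : (χ g = 1 → g ∈ Submonoid.closure (S * S)) ∧
      (χ g = -1 → ∀ s ∈ S, g * s ∈ Submonoid.closure (S * S)) from h.1 hg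
  clear hg
  induction g using Submonoid.induction_of_closure_eq_top_right hgen with
  | one => simp [one_mem]
  | mul_right y x hx ih =>
    rw [map_mul, hχ x hx]
    rcases Int.units_eq_one_or (χ y) with hy | hy
    · refine ⟨fun h ↦ by simp [hy] at h, fun _ s hs ↦ ?_⟩
      rw [mul_assoc]
      exact mul_mem (ih.1 hy) (Submonoid.subset_closure (Set.mul_mem_mul hx hs))
    · exact ⟨fun _ ↦ ih.2 hy x hx, fun h ↦ by simp [hy] at h⟩

end ParityGenerators

section DistanceTwoGraph

variable {G : Type*} [Group G] {S : Set G} {χ : G →* ℤˣ} {Γ : SimpleGraph G}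
  {H : SimpleGraph {x : G // χ x = 1}}

theorem adj_of_eq_mul_mul (hΓ : ∀ x y : G, Γ.Adj x y ↔ y⁻¹ * x ∈ S)
    (hH : ∀ x y : {x : G // χ x = 1},
      H.Adj x y ↔ x ≠ y ∧ ∃ z : G, Γ.Adj x.1 z ∧ Γ.Adj y.1 z)
    (hS_inv : ∀ s ∈ S, s⁻¹ ∈ S) {x y : {x : G // χ x = 1}} (hxy : x ≠ y) {s t : G}
    (hs : s ∈ S) (ht : t ∈ S) (hy : y.1 = x.1 * (s * t)) : H.Adj x y := by
  refine (hH x y).2 ⟨hxy, x.1 * s, (hΓ _ _).2 ?_, (hΓ _ _).2 ?_⟩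
  · simpa using hS_inv s hs
  · simpa [hy, mul_assoc] using ht

theorem reachable_of_inv_mul_mem_mclosure (hΓ : ∀ x y : G, Γ.Adj x y ↔ y⁻¹ * x ∈ S)
    (hH : ∀ x y : {x : G // χ x = 1},
      H.Adj x y ↔ x ≠ y ∧ ∃ z : G, Γ.Adj x.1 z ∧ Γ.Adj y.1 z)
    (hS_inv : ∀ s ∈ S, s⁻¹ ∈ S) (hχ : ∀ s ∈ S, χ s = -1) (x y : {x : G // χ x = 1})
    (hxy : x.1⁻¹ * y.1 ∈ Submonoid.closure (S * S)) : H.Reachable x y := by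
  obtain ⟨k, hk, hky⟩ : ∃ k ∈ Submonoid.closure (S * S), y.1 = x.1 * k :=
    ⟨_, hxy, by rw [mul_inv_cancel_left]⟩
  clear hxy
  induction hk using Submonoid.closure_induction_right generalizing y with
  | one => rw [Subtype.ext (hky.trans (mul_one _))]
  | mul_right k _ st hst ih =>
    obtain ⟨s, hs, t, ht, rfl⟩ := hst
    have hw : χ (x.1 * k) = 1 := by
      simpa [hky, mul_assoc, hχ s hs, hχ t ht] using y.2
    refine (ih ⟨_, hw⟩ rfl).trans ?_
    by_cases hwy : (⟨_, hw⟩ : {x : G // χ x = 1}) = y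
    · rw [hwy]
    · exact (adj_of_eq_mul_mul hΓ hH hS_inv hwy hs ht (by rw [hky, mul_assoc])).reachable

end DistanceTwoGraph

/-- Let `n ≥ 3`, `Γ = Cay_L(Sym_n, S)` the left Star graph with
`S = {swap 0 i : i ≠ 0}` (0-based), and let `H` be the graph on the even
permutations in which two distinct vertices are adjacent iff they have a common
neighbor in `Γ`. Then `H` is connected. -/
theorem star_graph_distance_two_graph_connected
    (n : ℕ) (hn : 3 ≤ n)
    (S : Set (Equiv.Perm (Fin n)))
    (hS : S = {σ | ∃ i : Fin n, i ≠ ⟨0, by omega⟩ ∧ σ = Equiv.swap ⟨0, by omega⟩ i})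
    (Γ : SimpleGraph (Equiv.Perm (Fin n)))
    (hΓ : ∀ x y : Equiv.Perm (Fin n), Γ.Adj x y ↔ y⁻¹ * x ∈ S)
    (H : SimpleGraph {x : Equiv.Perm (Fin n) // Equiv.Perm.sign x = 1})
    (hH : ∀ x y : {x : Equiv.Perm (Fin n) // Equiv.Perm.sign x = 1},
      H.Adj x y ↔ x ≠ y ∧ ∃ z : Equiv.Perm (Fin n), Γ.Adj x.1 z ∧ Γ.Adj y.1 z) :
    H.Connected := by
  have hgen : Submonoid.closure S = ⊤ := hS ▸ Equiv.Perm.mclosure_swap_left_eq_top _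
  have hS_inv : ∀ s ∈ S, s⁻¹ ∈ S := by
    rw [hS]
    rintro _ ⟨i, hi, rfl⟩
    exact ⟨i, hi, Equiv.swap_inv _ _⟩
  have hsign : ∀ s ∈ S, Equiv.Perm.sign s = -1 := by
    rw [hS]
    rintro _ ⟨i, hi, rfl⟩
    exact Equiv.Perm.sign_swap hi.symm
  refine (SimpleGraph.connected_iff_exists_forall_reachable H).2
    ⟨⟨1, Equiv.Perm.sign_one⟩, fun y ↦ ?_⟩
  refine reachable_of_inv_mul_mem_mclosure hΓ hH hS_inv hsign _ y ?_
  exact mem_mclosure_mul_self_of_map_eq_one hgen hsign (by simpa using y.2)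
end
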